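/- Let G be a finite graph with probability weights μ, let I be an independent set of G, and let U = V(G) \ (I ∪ N(I)). For any independent set J of G^{n-1}, the set K = (I × V(G)^{n-1}) ∪ (U × J) is an independent set of G^n, and μ^{⊗n}(K) = μ(I) + μ(U)·μ^{⊗(n-1)}(J). -/

import Mathlib

open Finset Filter

/-- `I` is an independent set of vertices in `G`. -/
def IsIndepSet {V : Type*} (G : SimpleGraph V) (I : Finset V) : Prop :=
  ∀ u ∈ I, ∀ v ∈ I, ¬ G.Adj u v

/-- The neighborhood `N(I)`: vertices adjacent to at least one vertex of `I`. -/
noncomputable def nbhd {V : Type*} [Fintype V] (G : SimpleGraph V) (I : Finset V) : Finset V :=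
  @Finset.filter _ (fun v => ∃ u ∈ I, G.Adj u v) (Classical.decPred _) Finset.univ

/-- Measure of a finite set of vertices: sum of the weights. -/
def fmeas {V : Type*} (μ : V → ℝ) (S : Finset V) : ℝ := ∑ v ∈ S, μ v

/-- The `n`-fold tensor (categorical) power of `G`. -/
def tpow {V : Type*} (G : SimpleGraph V) (n : ℕ) : SimpleGraph (Fin n → V) where
  Adj u v := u ≠ v ∧ ∀ i, G.Adj (u i) (v i)
  symm := ⟨fun u v h => ⟨h.1.symm, fun i => (h.2 i).symm⟩⟩
  loopless := ⟨fun u h => h.1 rfl⟩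

/-- Product measure of a set of `n`-tuples. -/
noncomputable def pmeas {V : Type*} (μ : V → ℝ) (n : ℕ) (S : Finset (Fin n → V)) : ℝ :=
  ∑ x ∈ S, ∏ i, μ (x i)

/-- `ᾱ(G)`: the supremum (= maximum) of the measures of independent sets of `G`. -/
noncomputable def alphaBar {V : Type*} (G : SimpleGraph V) (μ : V → ℝ) : ℝ :=
  sSup {x : ℝ | ∃ I : Finset V, IsIndepSet G I ∧ x = fmeas μ I}

/-- `ᾱ(G^n)` with the product measure. -/
noncomputable def alphaPow {V : Type*} (G : SimpleGraph V) (μ : V → ℝ) (n : ℕ) : ℝ :=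
  alphaBar (tpow G n) (fun x => ∏ i, μ (x i))


/-!
Write `K` as the union of the cylinders `I × V^{n-1}` and `U × J`. Tuples adjacent in `G^n` are
adjacent in the first coordinate, which rules out adjacent pairs inside the `I`-part and across
the two parts, as `U` avoids `I ∪ N(I)`; inside the `U`-part they are also adjacent in the tail,
which `J` forbids (for `n ≥ 2`). The cylinders are disjoint and `μ^{⊗(n-1)}(V^{n-1}) = 1`,
which gives the measure.
-/

section

variable {V : Type*}

theorem mem_nbhd [Fintype V] {G : SimpleGraph V} {I : Finset V} {v : V} :
    v ∈ nbhd G I ↔ ∃ u ∈ I, G.Adj u v := by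
  simp [nbhd]

theorem not_adj_of_mem_compl_nbhd [Fintype V] [DecidableEq V] {G : SimpleGraph V}
    {I : Finset V} {u v : V} (hu : u ∈ I) (hv : v ∈ univ \ (I ∪ nbhd G I)) : ¬G.Adj u v :=
  fun huv => (mem_sdiff.1 hv).2 (mem_union_right _ (mem_nbhd.2 ⟨u, hu, huv⟩))

theorem tpow_adj_iff {G : SimpleGraph V} {n : ℕ} [NeZero n] {x y : Fin n → V} :
    (tpow G n).Adj x y ↔ ∀ i, G.Adj (x i) (y i) :=
  ⟨fun h => h.2, fun h => ⟨fun hxy => G.ne_of_adj (h 0) (congrFun hxy 0), h⟩⟩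

def consProd {m : ℕ} (A : Finset V) (B : Finset (Fin m → V)) : Finset (Fin (m + 1) → V) :=
  (A ×ˢ B).map (Fin.consEquiv fun _ => V).toEmbedding

variable {m : ℕ}

theorem mem_consProd {A : Finset V} {B : Finset (Fin m → V)} {x : Fin (m + 1) → V} :
    x ∈ consProd A B ↔ x 0 ∈ A ∧ Fin.tail x ∈ B := by
  rw [consProd, mem_map_equiv, mem_product]
  rfl

theorem disjoint_consProd {A A' : Finset V} (h : Disjoint A A') (B B' : Finset (Fin m → V)) :
    Disjoint (consProd A B) (consProd A' B') :=
  (Finset.disjoint_map _).2 (disjoint_product.2 (Or.inl h))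

theorem pmeas_consProd (μ : V → ℝ) (A : Finset V) (B : Finset (Fin m → V)) :
    pmeas μ (m + 1) (consProd A B) = fmeas μ A * pmeas μ m B := by
  simp only [pmeas, fmeas, consProd, sum_map, sum_product, sum_mul_sum, Fin.prod_univ_succ]
  rfl

theorem pmeas_univ [Fintype V] {μ : V → ℝ} (hμ : ∑ v, μ v = 1) (n : ℕ) :
    pmeas μ n univ = 1 := by
  rw [pmeas, ← Fintype.sum_pow, hμ, one_pow]

theorem IsIndepSet.union_consProd [Fintype V] [DecidableEq V] [NeZero m] {G : SimpleGraph V}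
    {I U : Finset V} {J : Finset (Fin m → V)} (hI : IsIndepSet G I)
    (hIU : ∀ u ∈ I, ∀ v ∈ U, ¬G.Adj u v) (hJ : IsIndepSet (tpow G m) J) :
    IsIndepSet (tpow G (m + 1)) (consProd I univ ∪ consProd U J) := by
  intro x hx y hy hxy
  have hadj := tpow_adj_iff.1 hxy
  simp only [mem_union, mem_consProd, mem_univ, and_true] at hx hy
  rcases hx with hx | ⟨hxU, hxJ⟩ <;> rcases hy with hy | ⟨hyU, hyJ⟩
  · exact hI _ hx _ hy (hadj 0)
  · exact hIU _ hx _ hyU (hadj 0)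
  · exact hIU _ hy _ hxU (hadj 0).symm
  · exact hJ _ hxJ _ hyJ (tpow_adj_iff.2 fun i => hadj i.succ)

end

theorem stmt_17_general {V : Type*} [Fintype V] [DecidableEq V] (G : SimpleGraph V) (μ : V → ℝ)
    (hμ1 : ∑ v, μ v = 1)
    (I : Finset V) (hI : IsIndepSet G I)
    (m : ℕ) (hm : 1 ≤ m)
    (J : Finset (Fin m → V)) (hJ : IsIndepSet (tpow G m) J) :
    IsIndepSet (tpow G (m + 1))
      (@Finset.filter _ (fun x : Fin (m + 1) → V =>
          x 0 ∈ I ∨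
            (x 0 ∈ Finset.univ \ (I ∪ nbhd G I) ∧ (fun i : Fin m => x i.succ) ∈ J))
        (Classical.decPred _) Finset.univ) ∧
    pmeas μ (m + 1)
      (@Finset.filter _ (fun x : Fin (m + 1) → V =>
          x 0 ∈ I ∨
            (x 0 ∈ Finset.univ \ (I ∪ nbhd G I) ∧ (fun i : Fin m => x i.succ) ∈ J))
        (Classical.decPred _) Finset.univ)
      = fmeas μ I + fmeas μ (Finset.univ \ (I ∪ nbhd G I)) * pmeas μ m J := by
  have : NeZero m := ⟨by omega⟩
  set U := univ \ (I ∪ nbhd G I)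
  have hK : @Finset.filter _ (fun x : Fin (m + 1) → V => x 0 ∈ I ∨
        (x 0 ∈ U ∧ (fun i : Fin m => x i.succ) ∈ J)) (Classical.decPred _) univ =
      consProd I univ ∪ consProd U J := by
    ext x
    simp only [mem_filter, mem_union, mem_consProd, mem_univ, true_and, and_true]
    rfl
  have hIU : Disjoint I U := disjoint_sdiff.mono_left subset_union_left
  rw [hK]
  refine ⟨hI.union_consProd (fun _ hu _ => not_adj_of_mem_compl_nbhd hu) hJ, ?_⟩
  rw [pmeas, sum_union (disjoint_consProd hIU _ _), ← pmeas, ← pmeas, pmeas_consProd,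
    pmeas_consProd, pmeas_univ hμ1, mul_one]

theorem stmt_17 {V : Type*} [Fintype V] [DecidableEq V] (G : SimpleGraph V) (μ : V → ℝ)
    (hμ0 : ∀ v, 0 ≤ μ v) (hμ1 : ∑ v, μ v = 1)
    (I : Finset V) (hI : IsIndepSet G I)
    (m : ℕ) (hm : 1 ≤ m)
    (J : Finset (Fin m → V)) (hJ : IsIndepSet (tpow G m) J) :
    IsIndepSet (tpow G (m + 1))
      (@Finset.filter _ (fun x : Fin (m + 1) → V =>
          x 0 ∈ I ∨
            (x 0 ∈ Finset.univ \ (I ∪ nbhd G I) ∧ (fun i : Fin m => x i.succ) ∈ J))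
        (Classical.decPred _) Finset.univ) ∧
    pmeas μ (m + 1)
      (@Finset.filter _ (fun x : Fin (m + 1) → V =>
          x 0 ∈ I ∨
            (x 0 ∈ Finset.univ \ (I ∪ nbhd G I) ∧ (fun i : Fin m => x i.succ) ∈ J))
        (Classical.decPred _) Finset.univ)
      = fmeas μ I + fmeas μ (Finset.univ \ (I ∪ nbhd G I)) * pmeas μ m J :=
  stmt_17_general G μ hμ1 I hI m hm J hJ
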